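/- arXiv:2411.01321 — 2 statements merged into one kernel-verified Lean document; each statement's English description precedes it below -/
import Mathlib

section
/- Let E be a real normed vector space and let S, T ⊆ E be sets such that S, T, Sᶜ, Tᶜ are all nonempty, and such that the Hausdorff distances hausdorffDist(S, T) and hausdorffDist(Sᶜ, Tᶜ) are finite. Then for every q ∈ E, |sdf(q, S) − sdf(q, T)| ≤ hausdorffDist(S, T) + hausdorffDist(Sᶜ, Tᶜ). -/
/-- Signed distance function from a point to (the boundary of) a set:
negative inside `S`, positive outside. -/
noncomputable def sdf {E : Type*} [NormedAddCommGroup E] (q : E) (S : Set E) : ℝ :=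
  Metric.infDist q S - Metric.infDist q Sᶜ

open Metric

theorem Metric.abs_infDist_sub_infDist_le_hausdorffDist {α : Type*} [PseudoMetricSpace α]
    {s t : Set α} (x : α) (fin : hausdorffEDist s t ≠ ⊤) :
    |infDist x s - infDist x t| ≤ hausdorffDist s t := by
  have fin' : hausdorffEDist t s ≠ ⊤ := by rwa [hausdorffEDist_comm]
  rw [abs_sub_le_iff]
  constructor
  · linarith [infDist_le_infDist_add_hausdorffDist (x := x) fin',
      hausdorffDist_comm (s := s) (t := t)]
  · linarith [infDist_le_infDist_add_hausdorffDist (x := x) fin]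

theorem sdf_dist_le_hausdorff_general {E : Type*} [NormedAddCommGroup E]
    (S T : Set E)
    (hfin : EMetric.hausdorffEdist S T ≠ ⊤)
    (hfinc : EMetric.hausdorffEdist Sᶜ Tᶜ ≠ ⊤) :
    ∀ q : E, |sdf q S - sdf q T| ≤
      Metric.hausdorffDist S T + Metric.hausdorffDist Sᶜ Tᶜ := by
  intro q
  calc |sdf q S - sdf q T|
      = |(infDist q S - infDist q T) - (infDist q Sᶜ - infDist q Tᶜ)| := by
        unfold sdf; congr 1; ring
    _ ≤ |infDist q S - infDist q T| + |infDist q Sᶜ - infDist q Tᶜ| := abs_sub _ _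
    _ ≤ hausdorffDist S T + hausdorffDist Sᶜ Tᶜ :=
        add_le_add (abs_infDist_sub_infDist_le_hausdorffDist q hfin)
          (abs_infDist_sub_infDist_le_hausdorffDist q hfinc)

/-- The signed distance functions of two sets differ by at most the sum of the
Hausdorff distances between the sets and between their complements. -/
theorem sdf_dist_le_hausdorff {E : Type*} [NormedAddCommGroup E] [NormedSpace ℝ E]
    (S T : Set E) (hS : S.Nonempty) (hT : T.Nonempty)
    (hSc : Sᶜ.Nonempty) (hTc : Tᶜ.Nonempty)
    (hfin : EMetric.hausdorffEdist S T ≠ ⊤)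
    (hfinc : EMetric.hausdorffEdist Sᶜ Tᶜ ≠ ⊤) :
    ∀ q : E, |sdf q S - sdf q T| ≤
      Metric.hausdorffDist S T + Metric.hausdorffDist Sᶜ Tᶜ :=
  sdf_dist_le_hausdorff_general S T hfin hfinc
end

section
/- (CBF invariance along a trajectory.) Let h : ℝ × ℝⁿ → ℝ be continuously differentiable, let α : ℝ → ℝ be locally Lipschitz, monotone nondecreasing with α(0) = 0, and let x : ℝ → ℝⁿ be differentiable. Suppose that for all t ≥ 0, ⟨∇ₓ h(t, x(t)), x′(t)⟩ + (∂h/∂t)(t, x(t)) ≥ −α(h(t, x(t))), and that h(0, x(0)) ≥ 0. Then h(t, x(t)) ≥ 0 for all t ≥ 0. -/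
/-!
Along the trajectory, `φ t = h t (x t)` has derivative at least `-α (φ t)` by the chain rule,
and `-α (φ t) ≥ -α 0 = 0` wherever `φ t < 0`. So `φ` cannot decrease while it is negative:
on an interval `[s, t]` starting at the last time `s ≤ t` with `φ s ≥ 0`, it is monotone,
which rules out `φ t < 0`.
-/

open Set

theorem DifferentiableAt.hasDerivAt_comp_curve {E F : Type*} [NormedAddCommGroup E]
    [NormedSpace ℝ E] [NormedAddCommGroup F] [NormedSpace ℝ F] {h : ℝ → E → F} {x : ℝ → E}
    {t : ℝ} (hh : DifferentiableAt ℝ (fun p : ℝ × E => h p.1 p.2) (t, x t))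
    (hx : DifferentiableAt ℝ x t) :
    HasDerivAt (fun s => h s (x s))
      (fderiv ℝ (h t) (x t) (deriv x t) + deriv (fun s => h s (x t)) t) t := by
  set D := fderiv ℝ (fun p : ℝ × E => h p.1 p.2) (t, x t)
  have hD := hh.hasFDerivAt
  have h_total : HasDerivAt (fun s => h s (x s)) (D (1, deriv x t)) t := by
    exact hD.comp_hasDerivAt t ((hasDerivAt_id t).prodMk hx.hasDerivAt)
  have h_space : fderiv ℝ (h t) (x t) = D.comp (ContinuousLinearMap.inr ℝ ℝ E) :=
    (hD.comp (x t) ((hasFDerivAt_const t (x t)).prodMk (hasFDerivAt_id (x t)))).fderiv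
  have h_time : deriv (fun s => h s (x t)) t = D (1, 0) := by
    exact (hD.comp_hasDerivAt t ((hasDerivAt_id t).prodMk (hasDerivAt_const t (x t)))).deriv
  rw [h_space, h_time, ContinuousLinearMap.comp_apply, ContinuousLinearMap.inr_apply,
    ← D.map_add, Prod.mk_add_mk, zero_add, add_zero]
  exact h_total

theorem nonneg_of_deriv_nonneg_of_neg {f f' : ℝ → ℝ} {a b : ℝ} (hab : a ≤ b)
    (hf : ContinuousOn f (Icc a b)) (hf' : ∀ t ∈ Ioo a b, HasDerivAt f (f' t) t)
    (ha : 0 ≤ f a) (hneg : ∀ t ∈ Ioo a b, f t < 0 → 0 ≤ f' t) : 0 ≤ f b := by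
  by_contra! hb
  obtain ⟨s, ⟨⟨has, hsb⟩, hfs⟩, hs_last⟩ : ∃ s, IsGreatest (Icc a b ∩ f ⁻¹' Ici 0) s :=
    (isCompact_Icc.of_isClosed_subset (hf.preimage_isClosed_of_isClosed isClosed_Icc isClosed_Ici)
      inter_subset_left).exists_isGreatest ⟨a, ⟨le_rfl, hab⟩, ha⟩
  have h_after : ∀ u ∈ Ioc s b, f u < 0 := fun u ⟨hsu, hub⟩ => by
    by_contra! hfu
    exact (hs_last ⟨⟨has.trans hsu.le, hub⟩, hfu⟩).not_gt hsu
  have h_mono : MonotoneOn f (Icc s b) := by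
    refine monotoneOn_of_hasDerivWithinAt_nonneg (f' := f') (convex_Icc s b)
      (hf.mono (Icc_subset_Icc_left has)) (fun u hu => ?_) (fun u hu => ?_) <;>
      rw [interior_Icc] at hu
    · exact (hf' u ⟨has.trans_lt hu.1, hu.2⟩).hasDerivWithinAt
    · exact hneg u ⟨has.trans_lt hu.1, hu.2⟩ (h_after u ⟨hu.1, hu.2.le⟩)
  exact hb.not_ge (hfs.trans (h_mono ⟨le_rfl, hsb⟩ ⟨hsb, le_rfl⟩ hsb))

theorem cbf_invariance_general {n : ℕ} (h : ℝ → EuclideanSpace ℝ (Fin n) → ℝ)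
    (hh : ContDiff ℝ 1 (fun p : ℝ × EuclideanSpace ℝ (Fin n) => h p.1 p.2))
    (α : ℝ → ℝ) (hα_mono : Monotone α)
    (hα0 : α 0 = 0)
    (x : ℝ → EuclideanSpace ℝ (Fin n)) (hx : Differentiable ℝ x)
    (hineq : ∀ t : ℝ, 0 ≤ t →
      fderiv ℝ (h t) (x t) (deriv x t) + deriv (fun s => h s (x t)) t ≥
        -α (h t (x t)))
    (h0 : h 0 (x 0) ≥ 0) :
    ∀ t : ℝ, 0 ≤ t → h t (x t) ≥ 0 := by
  have hφ : ∀ t, HasDerivAt (fun s => h s (x s))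
      (fderiv ℝ (h t) (x t) (deriv x t) + deriv (fun s => h s (x t)) t) t := fun t =>
    (hh.differentiable one_ne_zero _).hasDerivAt_comp_curve (hx t)
  intro t ht
  refine nonneg_of_deriv_nonneg_of_neg ht
    (fun s _ => (hφ s).continuousAt.continuousWithinAt) (fun s _ => hφ s) h0 fun s hs hneg => ?_
  have hα_neg : α (h s (x s)) ≤ 0 := hα0 ▸ hα_mono hneg.le
  linarith [hineq s hs.1.le]

/-- CBF invariance along a trajectory: if the total time derivative of
`t ↦ h t (x t)` satisfies the CBF inequality
`⟨∇ₓ h, x'⟩ + ∂h/∂t ≥ -α (h)` for all `t ≥ 0` and `h 0 (x 0) ≥ 0`,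
then `h t (x t) ≥ 0` for all `t ≥ 0`. -/
theorem cbf_invariance {n : ℕ} (h : ℝ → EuclideanSpace ℝ (Fin n) → ℝ)
    (hh : ContDiff ℝ 1 (fun p : ℝ × EuclideanSpace ℝ (Fin n) => h p.1 p.2))
    (α : ℝ → ℝ) (hα_lip : LocallyLipschitz α) (hα_mono : Monotone α)
    (hα0 : α 0 = 0)
    (x : ℝ → EuclideanSpace ℝ (Fin n)) (hx : Differentiable ℝ x)
    (hineq : ∀ t : ℝ, 0 ≤ t →
      fderiv ℝ (h t) (x t) (deriv x t) + deriv (fun s => h s (x t)) t ≥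
        -α (h t (x t)))
    (h0 : h 0 (x 0) ≥ 0) :
    ∀ t : ℝ, 0 ≤ t → h t (x t) ≥ 0 :=
  cbf_invariance_general h hh α hα_mono hα0 x hx hineq h0
end
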